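/- Let q be a natural number and define f : ℝ → ℝ by f(x) = ∏_{n=0}^{q−1} (x − n). Then for every real x with x ≥ q, the derivative satisfies (f'(x))² ≥ f(x)·f''(x); that is, f is logarithmically concave on [q, ∞). -/
import Mathlib

open Polynomial

private noncomputable def PP (q : ℕ) : Polynomial ℝ :=
  ∏ n ∈ Finset.range q, (X - C (n : ℝ))

private lemma key (q : ℕ) : ∀ x : ℝ, (q : ℝ) ≤ x →
    (PP q).eval x * ((PP q).derivative.derivative).eval x ≤ ((PP q).derivative.eval x) ^ 2 := by
  induction q with
  | zero =>
    intro x hx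
    simp [PP]
  | succ q ih =>
    intro x hx
    have hx' : (q : ℝ) ≤ x := by push_cast at hx ⊢; linarith
    have hstep : PP (q + 1) = PP q * (X - C (q : ℝ)) := by
      simp [PP, Finset.prod_range_succ]
    have hd1 : (PP (q+1)).derivative = (PP q).derivative * (X - C (q : ℝ)) + PP q := by
      simp [hstep, derivative_mul]
    have hd2 : (PP (q+1)).derivative.derivative
        = (PP q).derivative.derivative * (X - C (q : ℝ)) + 2 * (PP q).derivative := by
      rw [hd1]
      simp [derivative_mul]
      ring
    have ha := ih x hx'
    have ht : (0:ℝ) ≤ x - (q : ℝ) := by linarith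
    set a := (PP q).eval x
    set b := (PP q).derivative.eval x
    set c := (PP q).derivative.derivative.eval x
    rw [hd2, hd1, hstep]
    simp only [eval_add, eval_mul, eval_sub, eval_X, eval_C, eval_ofNat]
    nlinarith [sq_nonneg (x - (q:ℝ)), sq_nonneg (b * (x - (q:ℝ)) - a), sq_nonneg a,
      mul_le_mul_of_nonneg_right ha (mul_self_nonneg (x - (q:ℝ)))]

/-- The falling-factorial polynomial `f(x) = ∏_{n=0}^{q-1} (x - n)` is logarithmically
concave on `[q, ∞)`: its derivative satisfies `f(x) f''(x) ≤ (f'(x))²` for `x ≥ q`. -/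
theorem stmt6 (q : ℕ) (f : ℝ → ℝ)
    (hf : f = fun x => ∏ n ∈ Finset.range q, (x - (n : ℝ))) :
    ∀ x : ℝ, (q : ℝ) ≤ x → f x * deriv (deriv f) x ≤ (deriv f x) ^ 2 := by
  have hfe : f = fun x => (PP q).eval x := by
    funext x
    simp [hf, PP, eval_prod]
  have hd1 : deriv f = fun x => (PP q).derivative.eval x := by
    funext x
    rw [hfe]
    exact Polynomial.deriv (PP q)
  have hd2 : deriv (deriv f) = fun x => (PP q).derivative.derivative.eval x := by
    funext x
    rw [hd1]
    exact Polynomial.deriv _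
  intro x hx
  rw [hd2, hd1, hfe]
  exact key q x hx
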